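/- If x = (x_0, …, x_n) ∈ ℂ^{n+1} is a nonzero vector satisfying x_0^k + x_1^k + x_2^k = 0 and λ_i x_0^k + x_1^k + x_{i+2}^k = 0 for i = 1, …, n−2, then at most one of the coordinates x_0, …, x_n is zero. In particular, the fixed point sets in S of the automorphisms φ_0, …, φ_n are pairwise disjoint. -/

import Mathlib

/-!
Put `a = x₀^k`, `b = x₁^k`. The equations say `x_{i+2}^k = -(λᵢ a + b)`, so `a = b = 0` forces
`x = 0`. Any two vanishing coordinates force `a = b = 0`: two equations
`λᵢ a + b = 0 = λⱼ a + b` with `λᵢ ≠ λⱼ` do, and so does a single one together with `a = 0`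
(or `b = 0`, as `λᵢ ≠ 0`).
-/

open Fin.NatCast in
/-- A nonzero vector `x ∈ ℂ^{n+1}` satisfies the defining equations of the generalized
Fermat curve of type `(k,n)`: `lam i * x₀^k + x₁^k + x_{i+2}^k = 0` for `0 ≤ i ≤ n - 2`
(with `lam 0 = 1`). -/
def fermatEqns (n k : ℕ) (lam : ℕ → ℂ) (x : Fin (n + 1) → ℂ) : Prop :=
  ∀ i : ℕ, i ≤ n - 2 → lam i * x 0 ^ k + x 1 ^ k + x ((i + 2 : ℕ) : Fin (n + 1)) ^ k = 0

theorem Fin.eq_zero_or_eq_one_or_two_le {n : ℕ} (m : Fin (n + 1)) :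
    m = 0 ∨ m = 1 ∨ 2 ≤ (m : ℕ) := by
  obtain ⟨_ | _ | m, hm⟩ := m
  · exact Or.inl rfl
  · exact Or.inr (Or.inl (Fin.ext (by simp [Nat.mod_eq_of_lt hm])))
  · exact Or.inr (Or.inr (by simp))

theorem eq_zero_and_eq_zero_of_mul_add_eq_zero {R : Type*} [Ring R] [NoZeroDivisors R]
    {s t a b : R} (hst : s ≠ t) (hs : s * a + b = 0) (ht : t * a + b = 0) : a = 0 ∧ b = 0 := by
  have ha : a = 0 := by
    have : (s - t) * a = 0 :=
      calc (s - t) * a = (s * a + b) - (t * a + b) := by noncomm_ring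
        _ = 0 := by rw [hs, ht, sub_zero]
    exact (mul_eq_zero.mp this).resolve_left (sub_ne_zero.mpr hst)
  exact ⟨ha, by simpa [ha] using hs⟩

namespace fermatEqns

variable {n k : ℕ} {lam : ℕ → ℂ} {x : Fin (n + 1) → ℂ}

theorem eqn_of_two_le (h : fermatEqns n k lam x) {m : Fin (n + 1)} (hm : 2 ≤ (m : ℕ)) :
    lam (m - 2) * x 0 ^ k + x 1 ^ k + x m ^ k = 0 := by
  have := h (m - 2) (by have := m.isLt; omega)
  rwa [Nat.sub_add_cancel hm, Fin.cast_val_eq_self] at this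

theorem eq_zero_of_apply_zero_of_apply_one (hk : k ≠ 0) (h : fermatEqns n k lam x)
    (h0 : x 0 = 0) (h1 : x 1 = 0) : x = 0 := by
  funext m
  rcases m.eq_zero_or_eq_one_or_two_le with rfl | rfl | hm
  · exact h0
  · exact h1
  · simpa [h0, h1, hk] using h.eqn_of_two_le hm

theorem apply_zero_and_apply_one_of_apply_eq_zero_of_two_le (hk : k ≠ 0)
    (hlam : ∀ i ≤ n - 2, lam i ≠ 0)
    (hlam_inj : ∀ i j, i ≤ n - 2 → j ≤ n - 2 → lam i = lam j → i = j)
    (h : fermatEqns n k lam x) {j m : Fin (n + 1)} (hjm : j ≠ m) (hm : 2 ≤ (m : ℕ))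
    (hxj : x j = 0) (hxm : x m = 0) : x 0 = 0 ∧ x 1 = 0 := by
  have hm_le : (m : ℕ) - 2 ≤ n - 2 := by have := m.isLt; omega
  have eqn_m := h.eqn_of_two_le hm
  rw [hxm, zero_pow hk, add_zero] at eqn_m
  rcases j.eq_zero_or_eq_one_or_two_le with rfl | rfl | hj
  · simpa [hxj, hk] using eqn_m
  · simpa [hxj, hk, hlam _ hm_le] using eqn_m
  · have hj_le : (j : ℕ) - 2 ≤ n - 2 := by have := j.isLt; omega
    have eqn_j := h.eqn_of_two_le hj
    rw [hxj, zero_pow hk, add_zero] at eqn_j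
    have hlam_ne : lam (j - 2) ≠ lam (m - 2) := fun heq =>
      hjm (Fin.ext (by have := hlam_inj _ _ hj_le hm_le heq; omega))
    simpa [hk] using eq_zero_and_eq_zero_of_mul_add_eq_zero hlam_ne eqn_j eqn_m

theorem eq_of_apply_eq_zero (hk : k ≠ 0) (hlam : ∀ i ≤ n - 2, lam i ≠ 0)
    (hlam_inj : ∀ i j, i ≤ n - 2 → j ≤ n - 2 → lam i = lam j → i = j)
    (h : fermatEqns n k lam x) (hx : x ≠ 0) {j j' : Fin (n + 1)}
    (hxj : x j = 0) (hxj' : x j' = 0) : j = j' := by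
  by_contra hjj'
  suffices x 0 = 0 ∧ x 1 = 0 from hx (h.eq_zero_of_apply_zero_of_apply_one hk this.1 this.2)
  by_cases hj' : 2 ≤ (j' : ℕ)
  · exact h.apply_zero_and_apply_one_of_apply_eq_zero_of_two_le hk hlam hlam_inj hjj' hj' hxj hxj'
  by_cases hj : 2 ≤ (j : ℕ)
  · exact h.apply_zero_and_apply_one_of_apply_eq_zero_of_two_le hk hlam hlam_inj
      (Ne.symm hjj') hj hxj' hxj
  have zero_or_one : ∀ m : Fin (n + 1), ¬2 ≤ (m : ℕ) → m = 0 ∨ m = 1 := fun m hm =>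
    m.eq_zero_or_eq_one_or_two_le.imp_right (·.resolve_right hm)
  rcases zero_or_one j hj with rfl | rfl <;> rcases zero_or_one j' hj' with rfl | rfl
  exacts [absurd rfl hjj', ⟨hxj, hxj'⟩, ⟨hxj', hxj⟩, absurd rfl hjj']

end fermatEqns

theorem stmt_10_general (k n : ℕ) (hk : 2 ≤ k)
    (lam : ℕ → ℂ) (hlam0 : lam 0 = 1)
    (hlam_ne0 : ∀ i, 1 ≤ i → i ≤ n - 2 → lam i ≠ 0)
    (hlam_inj : ∀ i j, i ≤ n - 2 → j ≤ n - 2 → lam i = lam j → i = j) :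
    (∀ x : Fin (n + 1) → ℂ, x ≠ 0 → fermatEqns n k lam x →
      {j : Fin (n + 1) | x j = 0}.Subsingleton) ∧
    (∀ j j' : Fin (n + 1), j ≠ j' →
      {p : Projectivization ℂ (Fin (n + 1) → ℂ) |
          fermatEqns n k lam p.rep ∧ p.rep j = 0} ∩
        {p : Projectivization ℂ (Fin (n + 1) → ℂ) |
          fermatEqns n k lam p.rep ∧ p.rep j' = 0} = ∅) := by
  have hlam : ∀ i ≤ n - 2, lam i ≠ 0 := by
    rintro (_ | i) hi
    · simp [hlam0]
    · exact hlam_ne0 _ (by omega) hi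
  have subsingleton : ∀ x : Fin (n + 1) → ℂ, x ≠ 0 → fermatEqns n k lam x →
      {j : Fin (n + 1) | x j = 0}.Subsingleton :=
    fun x hx h _ hxj _ hxj' => h.eq_of_apply_eq_zero (by omega) hlam hlam_inj hx hxj hxj'
  refine ⟨subsingleton, fun j j' hjj' => Set.eq_empty_iff_forall_notMem.mpr ?_⟩
  rintro p ⟨⟨h, hj⟩, -, hj'⟩
  exact hjj' (subsingleton _ p.rep_nonzero h hj hj')

/-- a nonzero solution of the defining equations of the generalized Fermat
curve `S` of type `(k,n)` has at most one vanishing coordinate; in particular the fixed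
point sets in `S` of the automorphisms `φ₀, …, φₙ` are pairwise disjoint. -/
theorem stmt_10 (k n : ℕ) (hk : 2 ≤ k) (hn : 2 ≤ n)
    (lam : ℕ → ℂ) (hlam0 : lam 0 = 1)
    (hlam_ne0 : ∀ i, 1 ≤ i → i ≤ n - 2 → lam i ≠ 0)
    (hlam_ne1 : ∀ i, 1 ≤ i → i ≤ n - 2 → lam i ≠ 1)
    (hlam_inj : ∀ i j, i ≤ n - 2 → j ≤ n - 2 → lam i = lam j → i = j) :
    (∀ x : Fin (n + 1) → ℂ, x ≠ 0 → fermatEqns n k lam x →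
      {j : Fin (n + 1) | x j = 0}.Subsingleton) ∧
    (∀ j j' : Fin (n + 1), j ≠ j' →
      {p : Projectivization ℂ (Fin (n + 1) → ℂ) |
          fermatEqns n k lam p.rep ∧ p.rep j = 0} ∩
        {p : Projectivization ℂ (Fin (n + 1) → ℂ) |
          fermatEqns n k lam p.rep ∧ p.rep j' = 0} = ∅) :=
  stmt_10_general k n hk lam hlam0 hlam_ne0 hlam_inj
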